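/- Stationary radially symmetric exact solution (3-21), generic case: Let d₁, d₂ be real, d₃ ≠ 0, and α a real constant with α ≠ 0 and α ≠ 2d₃; let C₀, C₁ be real constants and F : ℝ → ℝ any differentiable function. Then the time-independent functions u(t,x,y) = 2(2d₂ − α)/(x²+y²), v(t,x,y) = 2(2d₁ − α)/(x²+y²), w(t,x,y) = C₀ + C₁(x²+y²)^{−α/(2d₃)} + 2(2d₁ − α)(2d₂ − α)/((α − 2d₃)(x²+y²)) satisfy system (3-1) at every point (t,x,y) with (x,y) ≠ (0,0). -/

import Mathlib

/-- Partial derivative with respect to `t` of a function of `(t,x,y)`. -/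
noncomputable def pdT (f : ℝ × ℝ × ℝ → ℝ) (p : ℝ × ℝ × ℝ) : ℝ := fderiv ℝ f p (1, 0, 0)
/-- Partial derivative with respect to `x`. -/
noncomputable def pdX (f : ℝ × ℝ × ℝ → ℝ) (p : ℝ × ℝ × ℝ) : ℝ := fderiv ℝ f p (0, 1, 0)
/-- Partial derivative with respect to `y`. -/
noncomputable def pdY (f : ℝ × ℝ × ℝ → ℝ) (p : ℝ × ℝ × ℝ) : ℝ := fderiv ℝ f p (0, 0, 1)

/-- `(u,v,w)` solves system (3-1), the convective Lotka–Volterra system (`k = 1`)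
whose stream function is `Ψ = F(x²+y²) + α·arctan(x/y)`; here `F'` denotes the
derivative of `F`. -/
def Solves31 (α d₁ d₂ d₃ : ℝ) (F' : ℝ → ℝ) (u v w : ℝ × ℝ × ℝ → ℝ)
    (Ω : Set (ℝ × ℝ × ℝ)) : Prop :=
  ∀ p ∈ Ω,
    (pdT u p - α * (p.2.1 * pdX u p + p.2.2 * pdY u p) / (p.2.1 ^ 2 + p.2.2 ^ 2)
        + 2 * F' (p.2.1 ^ 2 + p.2.2 ^ 2) * (p.2.1 * pdY u p - p.2.2 * pdX u p)
      = d₁ * (pdX (pdX u) p + pdY (pdY u) p) - u p * v p) ∧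
    (pdT v p - α * (p.2.1 * pdX v p + p.2.2 * pdY v p) / (p.2.1 ^ 2 + p.2.2 ^ 2)
        + 2 * F' (p.2.1 ^ 2 + p.2.2 ^ 2) * (p.2.1 * pdY v p - p.2.2 * pdX v p)
      = d₂ * (pdX (pdX v) p + pdY (pdY v) p) - u p * v p) ∧
    (pdT w p - α * (p.2.1 * pdX w p + p.2.2 * pdY w p) / (p.2.1 ^ 2 + p.2.2 ^ 2)
        + 2 * F' (p.2.1 ^ 2 + p.2.2 ^ 2) * (p.2.1 * pdY w p - p.2.2 * pdX w p)
      = d₃ * (pdX (pdX w) p + pdY (pdY w) p) + u p * v p)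

/-!
The three functions depend on `(t, x, y)` only through `s = x² + y²`. For such a function
`g(s)` the time derivative and the swirl term `x ∂_y − y ∂_x` vanish (so `F` plays no role),
the radial advection `(x ∂_x + y ∂_y)/s` equals `2 g'(s)` and the Laplacian equals
`4 (g' + s g'')`; each equation of (3-1) becomes an ODE in `s`. For `c / s` both sides are
multiples of `1/s²`, which fixes the numerators of `u`, `v` and of the `1/s` term of `w`,
while `s^β` with `β = −α/(2d₃)` solves the homogeneous equation because `β` is a root of
the indicial equation `4 d₃ β² + 2 α β = 0`.
-/

open Filter Topology ContinuousLinearMap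

def radiusSq (p : ℝ × ℝ × ℝ) : ℝ := p.2.1 ^ 2 + p.2.2 ^ 2

def radialLift (g : ℝ → ℝ) (p : ℝ × ℝ × ℝ) : ℝ := g (radiusSq p)

noncomputable def spatialDot (p : ℝ × ℝ × ℝ) : ℝ × ℝ × ℝ →L[ℝ] ℝ :=
  p.2.1 • (fst ℝ ℝ ℝ ∘L snd ℝ ℝ (ℝ × ℝ)) + p.2.2 • (snd ℝ ℝ ℝ ∘L snd ℝ ℝ (ℝ × ℝ))

@[simp] lemma spatialDot_apply (p v : ℝ × ℝ × ℝ) :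
    spatialDot p v = p.2.1 * v.2.1 + p.2.2 * v.2.2 := rfl

lemma spatialDot_comm (p v : ℝ × ℝ × ℝ) : spatialDot p v = spatialDot v p := by
  simp only [spatialDot_apply]; ring

lemma hasFDerivAt_spatialDot_apply (p v : ℝ × ℝ × ℝ) :
    HasFDerivAt (fun q => spatialDot q v) (spatialDot v) p := by
  simpa only [spatialDot_comm _ v] using (spatialDot v).hasFDerivAt

lemma hasFDerivAt_radiusSq (p : ℝ × ℝ × ℝ) :
    HasFDerivAt radiusSq ((2 : ℝ) • spatialDot p) p := by
  have hx : HasFDerivAt (fun q : ℝ × ℝ × ℝ => q.2.1) (fst ℝ ℝ ℝ ∘L snd ℝ ℝ (ℝ × ℝ)) p :=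
    hasFDerivAt_snd.fst
  have hy : HasFDerivAt (fun q : ℝ × ℝ × ℝ => q.2.2) (snd ℝ ℝ ℝ ∘L snd ℝ ℝ (ℝ × ℝ)) p :=
    hasFDerivAt_snd.snd
  refine ((hx.pow 2).add (hy.pow 2)).congr_fderiv ?_
  ext <;> simp

lemma radiusSq_pos {p : ℝ × ℝ × ℝ} (hp : p.2 ≠ 0) : 0 < radiusSq p := by
  have hxy : p.2.1 ≠ 0 ∨ p.2.2 ≠ 0 := by
    by_contra! h
    exact hp (Prod.ext h.1 h.2)
  unfold radiusSq
  rcases hxy with h | h <;> positivity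

noncomputable def convectiveDeriv (α : ℝ) (F' : ℝ → ℝ) (f : ℝ × ℝ × ℝ → ℝ)
    (p : ℝ × ℝ × ℝ) : ℝ :=
  pdT f p - α * (p.2.1 * pdX f p + p.2.2 * pdY f p) / (p.2.1 ^ 2 + p.2.2 ^ 2)
    + 2 * F' (p.2.1 ^ 2 + p.2.2 ^ 2) * (p.2.1 * pdY f p - p.2.2 * pdX f p)

noncomputable def planarLaplacian (f : ℝ × ℝ × ℝ → ℝ) (p : ℝ × ℝ × ℝ) : ℝ :=
  pdX (pdX f) p + pdY (pdY f) p

section RadialLift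

variable {g : ℝ → ℝ} {p : ℝ × ℝ × ℝ}

lemma hasFDerivAt_radialLift {g' : ℝ} (hg : HasDerivAt g g' (radiusSq p)) :
    HasFDerivAt (radialLift g) ((2 * g') • spatialDot p) p := by
  refine (hg.comp_hasFDerivAt p (hasFDerivAt_radiusSq p)).congr_fderiv ?_
  ext <;> simp <;> ring

lemma fderiv_radialLift_apply {g' : ℝ} (hg : HasDerivAt g g' (radiusSq p)) (v : ℝ × ℝ × ℝ) :
    fderiv ℝ (radialLift g) p v = 2 * g' * spatialDot p v := by
  simp [(hasFDerivAt_radialLift hg).fderiv]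

lemma fderiv_fderiv_radialLift_apply {g' : ℝ → ℝ} {g'' : ℝ}
    (hg : ∀ᶠ s in 𝓝 (radiusSq p), HasDerivAt g (g' s) s) (hg' : HasDerivAt g' g'' (radiusSq p))
    (v : ℝ × ℝ × ℝ) :
    fderiv ℝ (fun q => fderiv ℝ (radialLift g) q v) p v
      = 2 * g' (radiusSq p) * spatialDot v v + 4 * g'' * spatialDot p v ^ 2 := by
  have hnear : (fun q => fderiv ℝ (radialLift g) q v) =ᶠ[𝓝 p]
      fun q => 2 * radialLift g' q * spatialDot q v := by
    filter_upwards [(hasFDerivAt_radiusSq p).continuousAt.eventually hg] with q hq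
    exact fderiv_radialLift_apply hq v
  have hprod := ((hasFDerivAt_radialLift hg').const_mul 2).mul (hasFDerivAt_spatialDot_apply p v)
  rw [hnear.fderiv_eq, HasFDerivAt.fderiv (f := fun q => 2 * radialLift g' q * spatialDot q v) hprod]
  simp [radialLift]
  ring

/-- The swirl term `x ∂_y − y ∂_x` annihilates radial functions, so `F'` drops out. -/
lemma convectiveDeriv_radialLift (α : ℝ) (F' : ℝ → ℝ) {g' : ℝ}
    (hg : HasDerivAt g g' (radiusSq p)) (hp : radiusSq p ≠ 0) :
    convectiveDeriv α F' (radialLift g) p = -2 * α * g' := by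
  have hp' : p.2.1 ^ 2 + p.2.2 ^ 2 ≠ 0 := hp
  simp only [convectiveDeriv, pdT, pdX, pdY, fderiv_radialLift_apply hg, spatialDot_apply]
  field_simp
  ring

lemma planarLaplacian_radialLift {g' : ℝ → ℝ} {g'' : ℝ}
    (hg : ∀ᶠ s in 𝓝 (radiusSq p), HasDerivAt g (g' s) s) (hg' : HasDerivAt g' g'' (radiusSq p)) :
    planarLaplacian (radialLift g) p = 4 * (g' (radiusSq p) + radiusSq p * g'') := by
  unfold planarLaplacian pdX pdY
  simp only [fderiv_fderiv_radialLift_apply hg hg', spatialDot_apply]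
  unfold radiusSq
  ring

end RadialLift

/-- The ODE in `s = x² + y²` to which `convectiveDeriv α F' f = d • planarLaplacian f + ρ (x² + y²)`
reduces for `f = radialLift g`. -/
def RadialODE (α d : ℝ) (g ρ : ℝ → ℝ) : Prop :=
  ∃ g' g'' : ℝ → ℝ, ∀ s > 0, HasDerivAt g (g' s) s ∧ HasDerivAt g' (g'' s) s ∧
    -2 * α * g' s = 4 * d * (g' s + s * g'' s) + ρ s

lemma RadialODE.convectiveDeriv_eq {α d : ℝ} {g ρ : ℝ → ℝ} (h : RadialODE α d g ρ)
    (F' : ℝ → ℝ) {p : ℝ × ℝ × ℝ} (hp : p.2 ≠ 0) :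
    convectiveDeriv α F' (radialLift g) p
      = d * planarLaplacian (radialLift g) p + ρ (radiusSq p) := by
  obtain ⟨g', g'', hg⟩ := h
  have hs := radiusSq_pos hp
  have hg_near : ∀ᶠ s in 𝓝 (radiusSq p), HasDerivAt g (g' s) s :=
    eventually_of_mem (Ioi_mem_nhds hs) fun s hs => (hg s hs).1
  obtain ⟨hg₁, hg₂, hode⟩ := hg _ hs
  rw [convectiveDeriv_radialLift α F' hg₁ hs.ne', planarLaplacian_radialLift hg_near hg₂, hode]
  ring

theorem solves31_radialLift {α d₁ d₂ d₃ : ℝ} {gu gv gw : ℝ → ℝ} (F' : ℝ → ℝ)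
    (hu : RadialODE α d₁ gu fun s => -(gu s * gv s))
    (hv : RadialODE α d₂ gv fun s => -(gu s * gv s))
    (hw : RadialODE α d₃ gw fun s => gu s * gv s) :
    Solves31 α d₁ d₂ d₃ F' (radialLift gu) (radialLift gv) (radialLift gw)
      {p | p.2 ≠ 0} := fun _ hp =>
  ⟨(hu.convectiveDeriv_eq F' hp).trans (sub_eq_add_neg _ _).symm,
    (hv.convectiveDeriv_eq F' hp).trans (sub_eq_add_neg _ _).symm,
    hw.convectiveDeriv_eq F' hp⟩

lemma hasDerivAt_const_div (c : ℝ) {s : ℝ} (hs : s ≠ 0) :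
    HasDerivAt (fun s => c / s) (-c / s ^ 2) s := by
  refine ((hasDerivAt_const s c).div (hasDerivAt_id' s) hs).congr_deriv ?_
  ring

lemma hasDerivAt_const_div_sq (c : ℝ) {s : ℝ} (hs : s ≠ 0) :
    HasDerivAt (fun s => c / s ^ 2) (-(2 * c) / s ^ 3) s := by
  refine ((hasDerivAt_const s c).div (hasDerivAt_pow 2 s) (pow_ne_zero 2 hs)).congr_deriv ?_
  field_simp
  ring

lemma hasDerivAt_const_add_mul_rpow_add_div (C₀ C₁ β c : ℝ) {s : ℝ} (hs : s ≠ 0) :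
    HasDerivAt (fun s => C₀ + C₁ * s ^ β + c / s) (C₁ * (β * s ^ (β - 1)) + -c / s ^ 2) s :=
  (((Real.hasDerivAt_rpow_const (Or.inl hs)).const_mul C₁).const_add C₀).add
    (hasDerivAt_const_div c hs)

lemma hasDerivAt_mul_rpow_add_div_sq (C₁ β c : ℝ) {s : ℝ} (hs : s ≠ 0) :
    HasDerivAt (fun s => C₁ * (β * s ^ (β - 1)) + -c / s ^ 2)
      (C₁ * (β * ((β - 1) * s ^ (β - 1 - 1))) + -(2 * -c) / s ^ 3) s :=
  (((Real.hasDerivAt_rpow_const (Or.inl hs)).const_mul β).const_mul C₁).add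
    (hasDerivAt_const_div_sq (-c) hs)

lemma radialODE_const_div {α d c : ℝ} {ρ : ℝ → ℝ}
    (hρ : ∀ s > 0, ρ s = (2 * α - 4 * d) * c / s ^ 2) :
    RadialODE α d (fun s => c / s) ρ := by
  refine ⟨_, _, fun s hs => ⟨hasDerivAt_const_div c hs.ne', hasDerivAt_const_div_sq (-c) hs.ne', ?_⟩⟩
  rw [hρ s hs]
  field_simp
  ring

lemma radialODE_const_add_mul_rpow_add_div {α d β c : ℝ} (C₀ C₁ : ℝ) {ρ : ℝ → ℝ}
    (hβ : 4 * d * β ^ 2 + 2 * α * β = 0) (hρ : ∀ s > 0, ρ s = (2 * α - 4 * d) * c / s ^ 2) :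
    RadialODE α d (fun s => C₀ + C₁ * s ^ β + c / s) ρ := by
  refine ⟨_, _, fun s hs => ⟨hasDerivAt_const_add_mul_rpow_add_div C₀ C₁ β c hs.ne',
    hasDerivAt_mul_rpow_add_div_sq C₁ β c hs.ne', ?_⟩⟩
  rw [hρ s hs, Real.rpow_sub_one hs.ne' (β - 1)]
  field_simp
  linear_combination -(C₁ * s ^ (β - 1) * s ^ 2) * hβ

/-- For `d = 0` the root is `0`, through the junk value `α / 0 = 0`. -/
lemma indicial_root (α d : ℝ) : 4 * d * (-(α / (2 * d))) ^ 2 + 2 * α * (-(α / (2 * d))) = 0 := by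
  rcases eq_or_ne d 0 with rfl | hd
  · simp
  · field_simp
    ring

theorem stationary_radial_solution_generic_general
    (d₁ d₂ d₃ α C₀ C₁ : ℝ) (hα2 : α ≠ 2 * d₃)
    (F : ℝ → ℝ) :
    Solves31 α d₁ d₂ d₃ (deriv F)
      (fun p => 2 * (2 * d₂ - α) / (p.2.1 ^ 2 + p.2.2 ^ 2))
      (fun p => 2 * (2 * d₁ - α) / (p.2.1 ^ 2 + p.2.2 ^ 2))
      (fun p => C₀ + C₁ * (p.2.1 ^ 2 + p.2.2 ^ 2) ^ (-(α / (2 * d₃)))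
        + 2 * (2 * d₁ - α) * (2 * d₂ - α) / ((α - 2 * d₃) * (p.2.1 ^ 2 + p.2.2 ^ 2)))
      {p : ℝ × ℝ × ℝ | p.2 ≠ 0} := by
  have hα2' : α - 2 * d₃ ≠ 0 := sub_ne_zero.mpr hα2
  simp only [div_mul_eq_div_div _ (α - 2 * d₃)]
  exact solves31_radialLift _
    (radialODE_const_div (c := 2 * (2 * d₂ - α)) fun s hs => by field_simp; ring)
    (radialODE_const_div (c := 2 * (2 * d₁ - α)) fun s hs => by field_simp; ring)
    (radialODE_const_add_mul_rpow_add_div C₀ C₁ (indicial_root α d₃)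
      (c := 2 * (2 * d₁ - α) * (2 * d₂ - α) / (α - 2 * d₃)) fun s hs => by field_simp; ring)

/-- Stationary radially symmetric exact solution (3-21), generic case
(`α ≠ 0`, `α ≠ 2d₃`): the time-independent functions
`u = 2(2d₂−α)/(x²+y²)`, `v = 2(2d₁−α)/(x²+y²)`,
`w = C₀ + C₁(x²+y²)^{−α/(2d₃)} + 2(2d₁−α)(2d₂−α)/((α−2d₃)(x²+y²))`
solve system (3-1) away from the spatial origin. -/
theorem stationary_radial_solution_generic
    (d₁ d₂ d₃ α C₀ C₁ : ℝ) (hd₃ : d₃ ≠ 0) (hα : α ≠ 0) (hα2 : α ≠ 2 * d₃)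
    (F : ℝ → ℝ) (hF : Differentiable ℝ F) :
    Solves31 α d₁ d₂ d₃ (deriv F)
      (fun p => 2 * (2 * d₂ - α) / (p.2.1 ^ 2 + p.2.2 ^ 2))
      (fun p => 2 * (2 * d₁ - α) / (p.2.1 ^ 2 + p.2.2 ^ 2))
      (fun p => C₀ + C₁ * (p.2.1 ^ 2 + p.2.2 ^ 2) ^ (-(α / (2 * d₃)))
        + 2 * (2 * d₁ - α) * (2 * d₂ - α) / ((α - 2 * d₃) * (p.2.1 ^ 2 + p.2.2 ^ 2)))
      {p : ℝ × ℝ × ℝ | p.2 ≠ 0} :=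
  stationary_radial_solution_generic_general d₁ d₂ d₃ α C₀ C₁ hα2 F
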